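/- Let ℓ ∈ ℕ and m ∈ ℤ with |m| ≤ ℓ. Define h̃_{a,b} := √((a+b)(a+b+1)) for integers a,b, and the sign factors š_m := sign(m)·(1−δ_{m,0})·√(1+δ_{m,1}) and ŝ_m := sign(m)·(1−δ_{m,−1})·√(1+δ_{m,0}), where sign(m) = 1 for m ≥ 0 and −1 for m < 0, and δ is the Kronecker delta. Then for all y ∈ (−1,1) and φ ∈ ℝ: √(1−y²)·cos(φ)·Y_{ℓ,m}(y,φ) = (1/(2(2ℓ+1)))·( š_m·( h̃_{ℓ+1,−m}·Y_{ℓ+1,m−1}(y,φ) − h̃_{ℓ−1,m}·Y_{ℓ−1,m−1}(y,φ) ) − ŝ_m·( h̃_{ℓ+1,m}·Y_{ℓ+1,m+1}(y,φ) − h̃_{ℓ−1,−m}·Y_{ℓ−1,m+1}(y,φ) ) ), where Y_{ℓ',m'} := 0 whenever |m'| > ℓ' or ℓ' < 0. (Here h̃_{ℓ−1,m} = √((ℓ+m−1)(ℓ+m)) and h̃_{ℓ+1,m} = √((ℓ+m+1)(ℓ+m+2)).) -/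

import Mathlib

open Polynomial

/-- Associated Legendre function
`P̂_ℓ^m(y) = (−1)^m·(1−y²)^{m/2}·(1/(2^ℓ·ℓ!))·(d/dy)^{ℓ+m}[(y²−1)^ℓ]`. -/
noncomputable def hatP (l m : ℕ) (y : ℝ) : ℝ :=
  (-1 : ℝ) ^ m * (1 - y ^ 2) ^ ((m : ℝ) / 2) * (1 / ((2 : ℝ) ^ l * (Nat.factorial l : ℝ))) *
    Polynomial.eval y
      ((fun q : Polynomial ℝ => Polynomial.derivative q)^[l + m] ((X ^ 2 - 1) ^ l))

/-- Normalized associated Legendre function `Č_ℓ^m = √((ℓ−m)!/(ℓ+m)!)·P̂_ℓ^m`. -/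
noncomputable def checkP (l m : ℕ) (y : ℝ) : ℝ :=
  Real.sqrt ((Nat.factorial (l - m) : ℝ) / (Nat.factorial (l + m) : ℝ)) * hatP l m y

/-- Real (tesseral) spherical harmonics `Y_{ℓ,m}(y,φ)`, defined to be `0` when
`ℓ < 0` or `|m| > ℓ`. -/
noncomputable def Ysh (l m : ℤ) (y φ : ℝ) : ℝ :=
  if 0 ≤ l ∧ |m| ≤ l then
    if m < 0 then Real.sqrt 2 * checkP l.toNat m.natAbs y * Real.sin ((m.natAbs : ℝ) * φ)
    else if m = 0 then checkP l.toNat 0 y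
    else Real.sqrt 2 * checkP l.toNat m.natAbs y * Real.cos ((m : ℝ) * φ)
  else 0

/-- `h̃_{a,b} = √((a+b)(a+b+1))`. -/
noncomputable def htC (a b : ℤ) : ℝ := Real.sqrt (((a + b) * (a + b + 1) : ℤ) : ℝ)

/-- `sign(m) = 1` for `m ≥ 0`, `−1` for `m < 0`. -/
noncomputable def sgn (m : ℤ) : ℝ := if 0 ≤ m then 1 else -1

/-- `š_m = sign(m)·(1−δ_{m,0})·√(1+δ_{m,1})`. -/
noncomputable def sCheck (m : ℤ) : ℝ :=
  sgn m * (1 - if m = 0 then 1 else 0) * Real.sqrt (1 + if m = 1 then 1 else 0)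

/-- `ŝ_m = sign(m)·(1−δ_{m,−1})·√(1+δ_{m,0})`. -/
noncomputable def sHat (m : ℤ) : ℝ :=
  sgn m * (1 - if m = -1 then 1 else 0) * Real.sqrt (1 + if m = 0 then 1 else 0)

/-!
`P̂_ℓ^m` is, up to the factor `(-√(1-y²))^m / (2^ℓ ℓ!)`, the `(ℓ+m)`-th
derivative of `(y²-1)^ℓ`. Two identities between such derivatives, one from differentiating
`(y²-1)^(ℓ+1)` twice and one from Leibniz's rule for `(y²-1)·(y²-1)^ℓ`, become after
normalisation the raising and lowering relations
`h̃_{ℓ+1,m} Č_{ℓ+1}^{m+1} - h̃_{ℓ-1,-m} Č_{ℓ-1}^{m+1} = -(2ℓ+1) √(1-y²) Č_ℓ^m` and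
`h̃_{ℓ+1,-m} Č_{ℓ+1}^{m-1} - h̃_{ℓ-1,m} Č_{ℓ-1}^{m-1} = (2ℓ+1) √(1-y²) Č_ℓ^m`.
Since `2 cos φ cos mφ` and `2 cos φ sin mφ` are sums of the neighbouring harmonics of orders
`m ± 1`, adding the two relations gives the recurrence; the factors `š_m`, `ŝ_m` absorb the
`√2` of the normalisation of `Y_{ℓ,±1}` against `Y_{ℓ,0}`, and at `m = 0` only the raising
relation is needed.
-/

noncomputable def rodrigues (l : ℕ) : ℝ[X] := (X ^ 2 - 1) ^ l

lemma rodrigues_succ (l : ℕ) : rodrigues (l + 1) = (X ^ 2 - 1) * rodrigues l := by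
  rw [rodrigues, rodrigues, pow_succ']

lemma natDegree_rodrigues (l : ℕ) : (rodrigues l).natDegree = 2 * l := by
  rw [rodrigues, natDegree_pow, show (X ^ 2 - 1 : ℝ[X]) = X ^ 2 - C 1 by simp,
    natDegree_X_pow_sub_C, mul_comm]

lemma iterate_derivative_rodrigues_eq_zero {l k : ℕ} (h : 2 * l < k) :
    derivative^[k] (rodrigues l) = 0 :=
  iterate_derivative_eq_zero (by rwa [natDegree_rodrigues])

lemma derivative_rodrigues_succ (l : ℕ) :
    derivative (rodrigues (l + 1)) = ((2 * (l + 1) : ℕ) : ℝ[X]) * (X * rodrigues l) := by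
  rw [rodrigues, rodrigues, derivative_pow]
  simp only [derivative_sub, derivative_X_pow, derivative_one, C_eq_natCast]
  push_cast
  ring

lemma X_mul_derivative_rodrigues (l : ℕ) :
    X * derivative (rodrigues l) = (2 * l : ℝ[X]) * (rodrigues l + rodrigues (l - 1)) := by
  cases l with
  | zero => simp [rodrigues]
  | succ l =>
    rw [derivative_rodrigues_succ, rodrigues_succ, Nat.add_sub_cancel]
    push_cast
    ring

lemma iterate_derivative_X_mul (p : ℝ[X]) (k : ℕ) :
    derivative^[k + 1] (X * p) = X * derivative^[k + 1] p + (k + 1 : ℝ[X]) * derivative^[k] p := by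
  induction k with
  | zero =>
    rw [Function.iterate_one, Function.iterate_zero_apply, derivative_mul, derivative_X]
    push_cast
    ring
  | succ k ih =>
    rw [Function.iterate_succ_apply', ih, Function.iterate_succ_apply' _ (k + 1)]
    simp only [derivative_add, derivative_mul, derivative_X, derivative_natCast, derivative_one,
      ← Function.iterate_succ_apply' derivative]
    push_cast
    ring

lemma iterate_derivative_X_sq_sub_one_mul (p : ℝ[X]) (k : ℕ) :
    derivative^[k + 2] ((X ^ 2 - 1) * p) = (X ^ 2 - 1) * derivative^[k + 2] p
      + (2 * (k + 2) : ℝ[X]) * (X * derivative^[k + 1] p)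
      + ((k + 2) * (k + 1) : ℝ[X]) * derivative^[k] p := by
  have hX := iterate_derivative_X_mul (X * p) (k + 1)
  rw [iterate_derivative_X_mul p (k + 1), iterate_derivative_X_mul p k] at hX
  rw [show (X ^ 2 - 1) * p = X * (X * p) - p by ring, iterate_derivative_sub, hX]
  push_cast
  ring

lemma iterate_derivative_rodrigues_succ_add_two (l k : ℕ) :
    derivative^[k + 2] (rodrigues (l + 1))
      = ((2 * l + 2) * (2 * l + 1) : ℝ[X]) * derivative^[k] (rodrigues l)
        + (4 * l * (l + 1) : ℝ[X]) * derivative^[k] (rodrigues (l - 1)) := by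
  have h2 : derivative^[2] (rodrigues (l + 1))
      = (((2 * l + 2) * (2 * l + 1) : ℕ) : ℝ[X]) * rodrigues l
        + ((4 * l * (l + 1) : ℕ) : ℝ[X]) * rodrigues (l - 1) := by
    rw [Function.iterate_succ_apply', Function.iterate_one, derivative_rodrigues_succ,
      derivative_natCast_mul, derivative_mul, derivative_X, one_mul, X_mul_derivative_rodrigues]
    push_cast
    ring
  rw [Function.iterate_add_apply, h2, iterate_map_add, iterate_derivative_natCast_mul,
    iterate_derivative_natCast_mul]
  push_cast
  ring

lemma X_sq_sub_one_mul_iterate_derivative_rodrigues (l k : ℕ) :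
    2 * ((l : ℝ[X]) + 1) * (2 * (l : ℝ[X]) + 1) * (X ^ 2 - 1) * derivative^[k + 2] (rodrigues l)
      = (2 * (l : ℝ[X]) - (k : ℝ[X]) - 1) * (2 * (l : ℝ[X]) - (k : ℝ[X]))
          * derivative^[k + 2] (rodrigues (l + 1))
        - 4 * (l : ℝ[X]) * ((l : ℝ[X]) + 1) * ((k : ℝ[X]) + 1) * ((k : ℝ[X]) + 2)
          * derivative^[k] (rodrigues (l - 1)) := by
  have hLeibniz := iterate_derivative_X_sq_sub_one_mul (rodrigues l) k
  rw [← rodrigues_succ] at hLeibniz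
  have hChain : derivative^[k + 2] (rodrigues (l + 1))
      = ((2 * (l + 1) : ℕ) : ℝ[X]) * (X * derivative^[k + 1] (rodrigues l)
        + (k + 1 : ℝ[X]) * derivative^[k] (rodrigues l)) := by
    rw [Function.iterate_succ_apply, derivative_rodrigues_succ, iterate_derivative_natCast_mul,
      iterate_derivative_X_mul]
  push_cast at hChain
  linear_combination
    (-2 * (2 * (l : ℝ[X]) + 1)) * (((l : ℝ[X]) + 1) * hLeibniz - ((k : ℝ[X]) + 2) * hChain)
      - (((k : ℝ[X]) + 1) * (k + 2)) * iterate_derivative_rodrigues_succ_add_two l k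

lemma hatP_eq_eval {l m : ℕ} {y : ℝ} (hy : 0 ≤ 1 - y ^ 2) :
    hatP l m y = (-√(1 - y ^ 2)) ^ m / (2 ^ l * l.factorial)
      * (derivative^[l + m] (rodrigues l)).eval y := by
  have hpow : (1 - y ^ 2) ^ ((m : ℝ) / 2) = √(1 - y ^ 2) ^ m := by
    rw [Real.sqrt_eq_rpow, ← Real.rpow_mul_natCast hy]
    ring_nf
  rw [hatP, hpow, neg_pow, rodrigues]
  ring

lemma hatP_eq_zero_of_lt {l m : ℕ} (h : l < m) (y : ℝ) : hatP l m y = 0 := by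
  rw [hatP, show (X ^ 2 - 1 : ℝ[X]) ^ l = rodrigues l from rfl,
    iterate_derivative_rodrigues_eq_zero (by omega), eval_zero, mul_zero]

lemma hatP_succ_sub_hatP_pred (l m : ℕ) {y : ℝ} (hy : 0 ≤ 1 - y ^ 2) :
    hatP (l + 1) (m + 1) y - hatP (l - 1) (m + 1) y
      = -(2 * l + 1) * √(1 - y ^ 2) * hatP l m y := by
  have hRec := congrArg (eval y) (iterate_derivative_rodrigues_succ_add_two l (l + m))
  simp only [eval_add, eval_mul, eval_natCast, eval_ofNat, eval_one] at hRec
  rw [hatP_eq_eval (l := l + 1) hy, hatP_eq_eval (l := l) hy,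
    show l + 1 + (m + 1) = l + m + 2 by omega, hRec]
  cases l with
  | zero =>
    rw [hatP_eq_zero_of_lt (by omega)]
    simp only [Nat.factorial, pow_succ]
    push_cast
    ring
  | succ l =>
    rw [hatP_eq_eval hy, show l + 1 - 1 + (m + 1) = l + 1 + m by omega, Nat.add_sub_cancel]
    simp only [Nat.factorial_succ, pow_succ]
    push_cast
    field_simp
    ring

lemma sqrt_mul_hatP_succ (l m : ℕ) {y : ℝ} (hy : 0 ≤ 1 - y ^ 2) :
    (2 * l + 3) * √(1 - y ^ 2) * hatP (l + 1) (m + 1) y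
      = (l - m + 1) * (l - m + 2) * hatP (l + 2) m y
        - (l + m + 1) * (l + m + 2) * hatP l m y := by
  have hRec := congrArg (eval y)
    (X_sq_sub_one_mul_iterate_derivative_rodrigues (l + 1) (l + m))
  simp only [eval_add, eval_sub, eval_mul, eval_natCast, eval_ofNat, eval_pow, eval_X,
    eval_one, Nat.add_sub_cancel] at hRec
  rw [hatP_eq_eval hy, hatP_eq_eval hy, hatP_eq_eval hy,
    show l + 1 + (m + 1) = l + m + 2 by omega, show l + 2 + m = l + m + 2 by omega]
  set s := √(1 - y ^ 2)
  have hs : s * (-s) ^ (m + 1) = (-s) ^ m * (y ^ 2 - 1) := by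
    linear_combination (-(-s) ^ m) * Real.mul_self_sqrt hy
  simp only [Nat.factorial_succ] at hRec ⊢
  push_cast at hRec ⊢
  linear_combination (norm := (field_simp; ring))
    ((-s) ^ m / (2 ^ (l + 2) * ((l + 2) * ((l + 1) * l.factorial)))) * hRec
    + ((2 * l + 3) * (derivative^[l + m + 2] (rodrigues (l + 1))).eval y
        / (2 ^ (l + 1) * ((l + 1) * l.factorial))) * hs

lemma htC_congr {a b c d : ℤ} (h : a + b = c + d) : htC a b = htC c d := by
  rw [htC, htC, h]

lemma htC_mul_self {a b : ℤ} (h : 0 ≤ a + b) :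
    htC a b * htC a b = (a + b : ℝ) * (a + b + 1) := by
  rw [htC, Real.mul_self_sqrt (by positivity)]
  push_cast
  ring

noncomputable def legendreNorm (l m : ℕ) : ℝ :=
  Real.sqrt ((Nat.factorial (l - m) : ℝ) / (Nat.factorial (l + m) : ℝ))

lemma checkP_eq (l m : ℕ) (y : ℝ) : checkP l m y = legendreNorm l m * hatP l m y := rfl

lemma checkP_eq_zero_of_lt {l m : ℕ} (h : l < m) (y : ℝ) : checkP l m y = 0 := by
  rw [checkP_eq, hatP_eq_zero_of_lt h, mul_zero]

lemma legendreNorm_eq_htC_mul {l n : ℕ} (h : n ≤ l) :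
    legendreNorm l n = htC (l + 1) n * legendreNorm (l + 1) (n + 1) := by
  obtain ⟨a, rfl⟩ := Nat.exists_eq_add_of_le h
  rw [legendreNorm, legendreNorm, htC, ← Real.sqrt_mul (by positivity),
    show n + a + 1 - (n + 1) = a by omega, show n + a + 1 + (n + 1) = 2 * n + a + 1 + 1 by omega,
    show n + a - n = a by omega, show n + a + n = 2 * n + a by omega]
  congr 1
  simp only [Nat.factorial_succ]
  push_cast
  field_simp
  ring

lemma legendreNorm_add_two_eq_htC_mul {l n : ℕ} (h : n ≤ l) :
    legendreNorm (l + 2) n = htC (l + 1) (-n) * legendreNorm (l + 1) (n + 1) := by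
  obtain ⟨a, rfl⟩ := Nat.exists_eq_add_of_le h
  rw [legendreNorm, legendreNorm, htC, ← Real.sqrt_mul (by push_cast; ring_nf; positivity),
    show n + a + 1 - (n + 1) = a by omega, show n + a + 1 + (n + 1) = 2 * n + a + 1 + 1 by omega,
    show n + a + 2 - n = a + 1 + 1 by omega, show n + a + 2 + n = 2 * n + a + 1 + 1 by omega]
  congr 1
  simp only [Nat.factorial_succ]
  push_cast
  field_simp
  ring

lemma htC_mul_checkP_succ_sub {l n : ℕ} (h : n ≤ l) {y : ℝ} (hy : 0 ≤ 1 - y ^ 2) :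
    htC (l + 1) n * checkP (l + 1) (n + 1) y - htC (l - 1) (-n) * checkP (l - 1) (n + 1) y
      = -((2 * l + 1) * √(1 - y ^ 2) * checkP l n y) := by
  have hSucc : htC (l + 1) n * checkP (l + 1) (n + 1) y
      = legendreNorm l n * hatP (l + 1) (n + 1) y := by
    rw [checkP_eq, ← mul_assoc, ← legendreNorm_eq_htC_mul h]
  have hPred : htC (l - 1) (-n) * checkP (l - 1) (n + 1) y
      = legendreNorm l n * hatP (l - 1) (n + 1) y := by
    rcases lt_or_ge (l - 1) (n + 1) with hlt | hge
    · rw [checkP_eq_zero_of_lt hlt, hatP_eq_zero_of_lt hlt, mul_zero, mul_zero]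
    · obtain ⟨L, rfl⟩ : ∃ L, l = L + 2 := ⟨l - 2, by omega⟩
      rw [checkP_eq, ← mul_assoc, htC_congr (c := L + 1) (d := -n) (by push_cast; ring),
        show L + 2 - 1 = L + 1 from rfl, ← legendreNorm_add_two_eq_htC_mul (by omega)]
  rw [hSucc, hPred, checkP_eq, ← mul_sub, hatP_succ_sub_hatP_pred l n hy]
  ring

lemma htC_mul_checkP_pred_sub {l n : ℕ} (hn : 1 ≤ n) (h : n ≤ l) {y : ℝ} (hy : 0 ≤ 1 - y ^ 2) :
    htC (l + 1) (-n) * checkP (l + 1) (n - 1) y - htC (l - 1) n * checkP (l - 1) (n - 1) y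
      = (2 * l + 1) * √(1 - y ^ 2) * checkP l n y := by
  obtain ⟨k, rfl⟩ := Nat.exists_eq_add_of_le' hn
  obtain ⟨L, rfl⟩ : ∃ L, l = L + 1 := ⟨l - 1, by omega⟩
  have hRec := sqrt_mul_hatP_succ L k hy
  have hsq₁ := htC_mul_self (a := L + 1) (b := -k) (by omega)
  have hsq₂ := htC_mul_self (a := L + 1) (b := k) (by omega)
  rw [htC_congr (a := (L + 1 : ℕ) + 1) (b := -(k + 1 : ℕ)) (c := L + 1) (d := -k)
      (by push_cast; ring),
    htC_congr (a := (L + 1 : ℕ) - 1) (b := (k + 1 : ℕ)) (c := L + 1) (d := k) (by push_cast; ring),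
    Nat.add_sub_cancel, Nat.add_sub_cancel, checkP_eq, checkP_eq, checkP_eq,
    legendreNorm_add_two_eq_htC_mul (l := L) (n := k) (by omega),
    legendreNorm_eq_htC_mul (l := L) (n := k) (by omega)]
  push_cast at hsq₁ hsq₂ ⊢
  linear_combination legendreNorm (L + 1) (k + 1) * hatP (L + 2) k y * hsq₁
    - legendreNorm (L + 1) (k + 1) * hatP L k y * hsq₂ - legendreNorm (L + 1) (k + 1) * hRec

lemma Ysh_of_pos {l m : ℤ} (hm : 0 < m) (y φ : ℝ) :
    Ysh l m y φ = √2 * checkP l.toNat m.toNat y * Real.cos (m * φ) := by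
  rw [Ysh, if_neg hm.not_gt, if_neg hm.ne', abs_of_pos hm, show m.natAbs = m.toNat by omega]
  split_ifs
  · rfl
  · rw [checkP_eq_zero_of_lt (by omega), mul_zero, zero_mul]

lemma Ysh_of_neg {l m : ℤ} (hm : m < 0) (y φ : ℝ) :
    Ysh l m y φ = -(√2 * checkP l.toNat m.natAbs y * Real.sin (m * φ)) := by
  have hcast : (m.natAbs : ℝ) = -m := by
    rw [Nat.cast_natAbs, Int.cast_abs, abs_of_neg (by exact_mod_cast hm)]
  rw [Ysh, if_pos hm, abs_of_neg hm, hcast, neg_mul, Real.sin_neg]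
  split_ifs
  · ring
  · rw [checkP_eq_zero_of_lt (by omega)]
    ring

lemma Ysh_zero {l : ℤ} (hl : 0 ≤ l) (y φ : ℝ) : Ysh l 0 y φ = checkP l.toNat 0 y := by
  simp [Ysh, hl]

lemma sCheck_mul_Ysh_sub_one {l m : ℤ} (hl : 0 ≤ l) (hm : 0 < m) (y φ : ℝ) :
    sCheck m * Ysh l (m - 1) y φ
      = √2 * checkP l.toNat (m - 1).toNat y * Real.cos ((m - 1 : ℤ) * φ) := by
  rcases eq_or_lt_of_le (show 1 ≤ m from hm) with rfl | hm1
  · simp [sCheck, sgn, Ysh_zero hl, one_add_one_eq_two]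
  · rw [Ysh_of_pos (by omega)]
    simp [sCheck, sgn, hm.le, hm.ne', hm1.ne']

lemma sHat_mul_Ysh_add_one {l m : ℤ} (hm : m < 0) (y φ : ℝ) :
    sHat m * Ysh l (m + 1) y φ
      = √2 * checkP l.toNat (m + 1).natAbs y * Real.sin ((m + 1 : ℤ) * φ) := by
  rcases eq_or_lt_of_le (show m ≤ -1 by omega) with rfl | hm1
  · simp [sHat]
  · rw [Ysh_of_neg (by omega)]
    simp [sHat, sgn, hm.not_ge, hm.ne, hm1.ne]

lemma sHat_of_pos {m : ℤ} (hm : 0 < m) : sHat m = 1 := by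
  simp [sHat, sgn, hm.le, hm.ne', show m ≠ -1 by omega]

lemma sCheck_of_neg {m : ℤ} (hm : m < 0) : sCheck m = -1 := by
  simp [sCheck, sgn, hm.not_ge, hm.ne, show m ≠ 1 by omega]

lemma sCheck_zero : sCheck 0 = 0 := by
  simp [sCheck]

lemma sHat_zero : sHat 0 = √2 := by
  norm_num [sHat, sgn]

lemma cos_sub_one_mul_add_cos_add_one_mul (x φ : ℝ) :
    Real.cos ((x - 1) * φ) + Real.cos ((x + 1) * φ) = 2 * Real.cos φ * Real.cos (x * φ) := by
  rw [sub_mul, add_mul, one_mul, Real.cos_sub, Real.cos_add]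
  ring

lemma sin_sub_one_mul_add_sin_add_one_mul (x φ : ℝ) :
    Real.sin ((x - 1) * φ) + Real.sin ((x + 1) * φ) = 2 * Real.cos φ * Real.sin (x * φ) := by
  rw [sub_mul, add_mul, one_mul, Real.sin_sub, Real.sin_add]
  ring

-- `a`, `b`, `c` stand for the `φ`-factors (cosines or sines) of orders `n - 1`, `n`, `n + 1`.
lemma sqrt_mul_cos_mul_checkP {l n : ℕ} (hn : 1 ≤ n) (h : n ≤ l) {y : ℝ} (hy : 0 ≤ 1 - y ^ 2)
    {φ a b c : ℝ} (habc : a + c = 2 * Real.cos φ * b) :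
    √(1 - y ^ 2) * Real.cos φ * (√2 * checkP l n y * b)
      = (1 / (2 * (2 * (l : ℝ) + 1))) *
          ((htC (l + 1) (-n) * (√2 * checkP (l + 1) (n - 1) y * a)
              - htC (l - 1) n * (√2 * checkP (l - 1) (n - 1) y * a))
            - (htC (l + 1) n * (√2 * checkP (l + 1) (n + 1) y * c)
              - htC (l - 1) (-n) * (√2 * checkP (l - 1) (n + 1) y * c))) := by
  have hRaise := htC_mul_checkP_succ_sub h hy
  have hLower := htC_mul_checkP_pred_sub hn h hy
  linear_combination (norm := (field_simp; ring))
    (√2 * c / (2 * (2 * l + 1))) * hRaise - (√2 * a / (2 * (2 * l + 1))) * hLower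
      - (√2 * √(1 - y ^ 2) * checkP l n y / 2) * habc

noncomputable def cosMulYshExpansion (l : ℕ) (m : ℤ) (y φ : ℝ) : ℝ :=
  (1 / (2 * (2 * (l : ℝ) + 1))) *
    (sCheck m * (htC ((l : ℤ) + 1) (-m) * Ysh ((l : ℤ) + 1) (m - 1) y φ
                  - htC ((l : ℤ) - 1) m * Ysh ((l : ℤ) - 1) (m - 1) y φ)
      - sHat m * (htC ((l : ℤ) + 1) m * Ysh ((l : ℤ) + 1) (m + 1) y φ
                  - htC ((l : ℤ) - 1) (-m) * Ysh ((l : ℤ) - 1) (m + 1) y φ))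

lemma sqrt_mul_cos_mul_Ysh_of_pos {l : ℕ} {m : ℤ} (hm0 : 0 < m) (hm : m ≤ l) {y : ℝ}
    (hy : 0 ≤ 1 - y ^ 2) (φ : ℝ) :
    √(1 - y ^ 2) * Real.cos φ * Ysh l m y φ = cosMulYshExpansion l m y φ := by
  rw [cosMulYshExpansion, sHat_of_pos hm0, one_mul, mul_sub (sCheck m),
    mul_left_comm (sCheck m), mul_left_comm (sCheck m), sCheck_mul_Ysh_sub_one (by omega) hm0,
    sCheck_mul_Ysh_sub_one (by omega) hm0, Ysh_of_pos hm0, Ysh_of_pos (by omega),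
    Ysh_of_pos (by omega)]
  lift m to ℕ using hm0.le
  simp only [Int.toNat_natCast, Int.toNat_natCast_add_one, Int.pred_toNat, Int.cast_natCast,
    Int.cast_add, Int.cast_sub, Int.cast_one]
  exact sqrt_mul_cos_mul_checkP (by omega) (by omega) hy
    (cos_sub_one_mul_add_cos_add_one_mul (m : ℝ) φ)

lemma sqrt_mul_cos_mul_Ysh_of_neg {l : ℕ} {m : ℤ} (hm0 : m < 0) (hm : -m ≤ l) {y : ℝ}
    (hy : 0 ≤ 1 - y ^ 2) (φ : ℝ) :
    √(1 - y ^ 2) * Real.cos φ * Ysh l m y φ = cosMulYshExpansion l m y φ := by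
  rw [cosMulYshExpansion, sCheck_of_neg hm0, mul_sub (sHat m),
    mul_left_comm (sHat m), mul_left_comm (sHat m), sHat_mul_Ysh_add_one hm0,
    sHat_mul_Ysh_add_one hm0, Ysh_of_neg hm0, Ysh_of_neg (by omega), Ysh_of_neg (by omega)]
  have habc := sin_sub_one_mul_add_sin_add_one_mul (m : ℝ) φ
  obtain ⟨n, rfl⟩ : ∃ n : ℕ, m = -n := ⟨m.natAbs, by omega⟩
  rw [show (-(n : ℤ) - 1).natAbs = n + 1 by omega, show (-(n : ℤ) + 1).natAbs = n - 1 by omega,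
    Int.natAbs_neg, Int.natAbs_natCast, neg_neg]
  simp only [Int.toNat_natCast, Int.toNat_natCast_add_one, Int.pred_toNat, Int.cast_natCast,
    Int.cast_add, Int.cast_sub, Int.cast_one, Int.cast_neg] at habc ⊢
  linear_combination sqrt_mul_cos_mul_checkP (l := l) (n := n) (by omega) (by omega) hy
    (a := -Real.sin ((-n + 1) * φ)) (b := -Real.sin (-n * φ)) (c := -Real.sin ((-n - 1) * φ))
    (by linear_combination -habc)

lemma sqrt_mul_cos_mul_Ysh_zero (l : ℕ) {y : ℝ} (hy : 0 ≤ 1 - y ^ 2) (φ : ℝ) :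
    √(1 - y ^ 2) * Real.cos φ * Ysh l 0 y φ = cosMulYshExpansion l 0 y φ := by
  have hRaise := htC_mul_checkP_succ_sub (Nat.zero_le l) hy
  rw [cosMulYshExpansion, sCheck_zero, sHat_zero, zero_add, neg_zero, Ysh_zero (by omega),
    Ysh_of_pos one_pos, Ysh_of_pos one_pos]
  simp only [Int.toNat_natCast, Int.toNat_natCast_add_one, Int.pred_toNat, Int.toNat_one,
    Int.cast_one, one_mul, Nat.cast_zero, neg_zero, zero_add] at hRaise ⊢
  linear_combination (norm := (field_simp; ring)) (Real.cos φ / (2 * l + 1)) * hRaise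
    + (Real.cos φ * (htC (l + 1) 0 * checkP (l + 1) 1 y - htC (l - 1) 0 * checkP (l - 1) 1 y)
        / (2 * (2 * l + 1))) * Real.mul_self_sqrt zero_le_two

theorem stmt17 (l : ℕ) (m : ℤ) (hm : |m| ≤ (l : ℤ)) :
    ∀ y ∈ Set.Ioo (-1 : ℝ) 1, ∀ φ : ℝ,
      Real.sqrt (1 - y ^ 2) * Real.cos φ * Ysh l m y φ
        = (1 / (2 * (2 * (l : ℝ) + 1))) *
            (sCheck m * (htC ((l : ℤ) + 1) (-m) * Ysh ((l : ℤ) + 1) (m - 1) y φ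
                          - htC ((l : ℤ) - 1) m * Ysh ((l : ℤ) - 1) (m - 1) y φ)
              - sHat m * (htC ((l : ℤ) + 1) m * Ysh ((l : ℤ) + 1) (m + 1) y φ
                          - htC ((l : ℤ) - 1) (-m) * Ysh ((l : ℤ) - 1) (m + 1) y φ)) := by
  rintro y ⟨hy₁, hy₂⟩ φ
  have hy : 0 ≤ 1 - y ^ 2 := by nlinarith
  have hml := abs_le.mp hm
  rcases lt_trichotomy m 0 with hm0 | rfl | hm0
  · exact sqrt_mul_cos_mul_Ysh_of_neg hm0 (by omega) hy φ
  · exact sqrt_mul_cos_mul_Ysh_zero l hy φ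
  · exact sqrt_mul_cos_mul_Ysh_of_pos hm0 hml.2 hy φ
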